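/- For any subset Y ⊆ ℝ^n, conv^n(Y) = conv(Y); i.e., the Brunn number of any subset of ℝ^n is at most n. -/

import Mathlib

open Set

/-- The union of all line segments with endpoints in `A`. -/
def segJoin {E : Type*} [AddCommGroup E] [Module ℝ E] (A : Set E) : Set E :=
  ⋃ a ∈ A, ⋃ b ∈ A, segment ℝ a b

/-- The iterated segment-join `convⁱ(A)`. -/
def segJoinIter {E : Type*} [AddCommGroup E] [Module ℝ E] : ℕ → Set E → Set E
  | 0, A => A
  | (i+1), A => segJoin (segJoinIter i A)

/-! Splitting a finite set into two halves, the convex hull of `2 ^ (m + 1)` points is one segment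
join of two convex hulls of `2 ^ m` points, so `m` joins reach the hull of `2 ^ m` points.
By Carathéodory, the hull of `Y ⊆ ℝⁿ` is the union of hulls of at most `n + 1 ≤ 2 ^ n` points. -/

section

variable {E : Type*} [AddCommGroup E] [Module ℝ E]

lemma subset_segJoin (A : Set E) : A ⊆ segJoin A := fun x hx =>
  subset_convexJoin_left ⟨x, hx⟩ hx

lemma segJoin_mono {A B : Set E} (h : A ⊆ B) : segJoin A ⊆ segJoin B :=
  convexJoin_mono h h

lemma segJoinIter_mono {A B : Set E} (h : A ⊆ B) (m : ℕ) :
    segJoinIter m A ⊆ segJoinIter m B := by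
  induction m with
  | zero => exact h
  | succ m ih => exact segJoin_mono ih

lemma segJoinIter_subset_convexHull (A : Set E) (m : ℕ) :
    segJoinIter m A ⊆ convexHull ℝ A := by
  induction m with
  | zero => exact subset_convexHull ℝ A
  | succ m ih =>
    calc segJoin (segJoinIter m A) ⊆ convexJoin ℝ (convexHull ℝ A) (convexHull ℝ A) :=
          convexJoin_mono ih ih
      _ ⊆ convexHull ℝ A := convexJoin_subset subset_rfl subset_rfl (convex_convexHull ℝ A)

lemma convexHull_union_subset_segJoin (s t : Set E) :
    convexHull ℝ (s ∪ t) ⊆ segJoin (convexHull ℝ s ∪ convexHull ℝ t) := by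
  rcases s.eq_empty_or_nonempty with rfl | hs
  · simpa using subset_segJoin (convexHull ℝ t)
  rcases t.eq_empty_or_nonempty with rfl | ht
  · simpa using subset_segJoin (convexHull ℝ s)
  rw [convexHull_union hs ht]
  exact convexJoin_mono subset_union_left subset_union_right

lemma convexHull_subset_segJoinIter_of_card_le {m : ℕ} (t : Finset E) (ht : t.card ≤ 2 ^ m) :
    convexHull ℝ (t : Set E) ⊆ segJoinIter m (t : Set E) := by
  induction m generalizing t with
  | zero =>
    rw [(Finset.card_le_one_iff_subsingleton.1 ht).convex.convexHull_eq]
    rfl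
  | succ m ih =>
    classical
    obtain ⟨t₁, ht₁t, ht₁⟩ := Finset.exists_subset_card_eq (min_le_left t.card (2 ^ m))
    have ht₂ : (t \ t₁).card ≤ 2 ^ m := by
      rw [Finset.card_sdiff_of_subset ht₁t, ht₁]
      rw [pow_succ] at ht
      omega
    have hsplit : (t : Set E) = (t₁ : Set E) ∪ ((t \ t₁ : Finset E) : Set E) := by
      rw [← Finset.coe_union, Finset.union_sdiff_of_subset ht₁t]
    calc convexHull ℝ (t : Set E)
        ⊆ segJoin (convexHull ℝ (t₁ : Set E) ∪ convexHull ℝ ↑(t \ t₁)) := by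
          rw [hsplit]; exact convexHull_union_subset_segJoin _ _
      _ ⊆ segJoin (segJoinIter m (t₁ : Set E) ∪ segJoinIter m ↑(t \ t₁)) :=
          segJoin_mono (union_subset_union (ih t₁ (ht₁ ▸ min_le_right _ _)) (ih _ ht₂))
      _ ⊆ segJoinIter (m + 1) (t : Set E) := by
          rw [hsplit]
          exact segJoin_mono (union_subset (segJoinIter_mono subset_union_left m)
            (segJoinIter_mono subset_union_right m))

theorem segJoinIter_eq_convexHull_of_finrank_lt [FiniteDimensional ℝ E] {m : ℕ}
    (hm : Module.finrank ℝ E < 2 ^ m) (A : Set E) : segJoinIter m A = convexHull ℝ A := by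
  refine (segJoinIter_subset_convexHull A m).antisymm ?_
  rw [convexHull_eq_union]
  refine iUnion₂_subset fun t htA => iUnion_subset fun ht_indep => ?_
  have ht : t.card ≤ 2 ^ m := by
    have := ht_indep.card_le_finrank_succ
    rw [Fintype.card_coe] at this
    have := Submodule.finrank_le (vectorSpan ℝ (range ((↑) : t → E)))
    omega
  exact (convexHull_subset_segJoinIter_of_card_le t ht).trans (segJoinIter_mono htA m)

end

/-- Corollary `BrunnRn`. For any subset `Y ⊆ ℝⁿ`, `convⁿ(Y) = conv(Y)`;
i.e. the Brunn number of any subset of `ℝⁿ` is at most `n`. -/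
theorem segJoinIter_eq_convexHull (n : ℕ) (Y : Set (EuclideanSpace ℝ (Fin n))) :
    segJoinIter n Y = convexHull ℝ Y :=
  segJoinIter_eq_convexHull_of_finrank_lt (by simpa using n.lt_two_pow_self) Y
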